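/- Let n be odd and k = n−1, and define Z_d(a) = Σ_M (-1)^M · T_d(φ⁺(M); a), summing over all maximal matchings M on {1,...,n}, where φ⁺(M) is the set of vectors (e_{i_r}±e_{j_r})/√2 for the edges (i_r,j_r) of M, and (-1)^M is the sign (-1)^{cross(M)+p-1} with p the isolated vertex. Then Z_d is a polynomial in the squared variables a_1², ..., a_n², and every monomial of Z_d with nonzero coefficient omits at least one variable (has at least one exponent equal to zero). -/

import Mathlib

open Finset

/-- The polynomial `T_{2m+k}(x_1,…,x_k) = c_m Σ_{r_1+⋯+r_k=m} (m choose r_1,…,r_k)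
∏_i x_i^{2r_i+1}/(2r_i+1)` of the paper, where `c_m = (-1)^m binom((n-k)/2, m)` and the
`k` variables are indexed by a finite type `ι` with `k = |ι|`. -/
noncomputable def Tpoly (n : ℕ) (ι : Type*) [Fintype ι] [DecidableEq ι] (m : ℕ)
    (x : ι → ℝ) : ℝ :=
  ((-1 : ℝ) ^ m *
      ((∏ j ∈ Finset.range m, (((n : ℝ) - (Fintype.card ι : ℝ)) / 2 - j)) /
        (Nat.factorial m))) *
    ∑ r ∈ (Fintype.piFinset fun _ : ι => Finset.range (m + 1)).filter
        (fun r => ∑ i, r i = m),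
      (Nat.multinomial Finset.univ r : ℝ) * ∏ i, x i ^ (2 * r i + 1) / (2 * r i + 1 : ℝ)

open scoped RealInnerProductSpace

/-- Maximal matchings on `{1,…,n}` (for `n` odd), encoded as involutions of `Fin n`
with exactly one fixed point; the edges are the 2-element orbits. -/
def maximalMatchings (n : ℕ) : Finset (Equiv.Perm (Fin n)) :=
  Finset.univ.filter fun σ =>
    σ * σ = 1 ∧ (Finset.univ.filter fun i => σ i = i).card = 1

/-- The number of crossings of the matching encoded by the involution `σ`: pairs of
edges `{i < σ i}`, `{j < σ j}` with `i < j < σ i < σ j`. -/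
def matchingCross {n : ℕ} (σ : Equiv.Perm (Fin n)) : ℕ :=
  (Finset.univ.filter fun p : Fin n × Fin n =>
    p.1 < σ p.1 ∧ p.2 < σ p.2 ∧ p.1 < p.2 ∧ p.2 < σ p.1 ∧ σ p.1 < σ p.2).card

/-- `p - 1` for the isolated vertex `p` of the matching (in one-based labelling), i.e.
the sum of the (zero-based) fixed points of `σ`. -/
def matchingIsolated {n : ℕ} (σ : Equiv.Perm (Fin n)) : ℕ :=
  ∑ i ∈ Finset.univ.filter (fun i => σ i = i), (i : ℕ)

/-- The pseudo-roots `(e_i ± e_{σ i})/√2`, over the edges `{i < σ i}` of the matching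
encoded by `σ`, forming the positive system `φ⁺(M)` of the `2`-structure of type
`A_1^{n-1}` in `D_n`. -/
noncomputable def matchingVec {n : ℕ} (σ : Equiv.Perm (Fin n))
    (x : {i : Fin n // i < σ i} × Bool) : EuclideanSpace ℝ (Fin n) :=
  (Real.sqrt 2)⁻¹ •
    (EuclideanSpace.single x.1.1 (1 : ℝ) +
      (if x.2 then (1 : ℝ) else -1) • EuclideanSpace.single (σ x.1.1) (1 : ℝ))

/-!
Each term `T_d(φ⁺(M); a)` is a polynomial in `a`. Negating `a_j` swaps the two pseudo-roots
`(e_i ± e_{σ i})/√2` of the edge through `j` and, when `j` is its smaller end `i`, also negates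
both of their inner products with `a`. As `T_d` is symmetric and odd in each variable, it is
unchanged, so every `a_j` occurs with even exponents only: the term is a polynomial in the
squares. The variable of the isolated vertex does not occur at all, and both properties pass to
the signed sum over matchings.
-/

lemma Finsupp.prod_pow_update_one {R σ : Type*} [CommMonoid R] [DecidableEq σ] (d : σ →₀ ℕ)
    (j : σ) (s : R) :
    (d.prod fun i k => Function.update (1 : σ → R) j s i ^ k) = s ^ d j := by
  rw [Finsupp.prod]
  by_cases hj : j ∈ d.support
  · rw [prod_eq_single_of_mem j hj fun i _ hi => by simp [hi]]
    simp
  · rw [Finsupp.notMem_support_iff.mp hj, pow_zero]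
    exact prod_eq_one fun i hi => by simp [show i ≠ j by rintro rfl; exact hj hi]

namespace MvPolynomial

variable {R σ : Type*}

lemma bind₁_C_mul_X_monomial [CommSemiring R] (c : σ → R) (d : σ →₀ ℕ) (r : R) :
    bind₁ (fun i => C (c i) * X i) (monomial d r) =
      monomial d (r * d.prod fun i k => c i ^ k) := by
  rw [bind₁_monomial, monomial_eq]
  simp only [Finsupp.prod, mul_pow, prod_mul_distrib, map_mul, map_prod, map_pow]
  ring

lemma coeff_bind₁_C_mul_X [CommSemiring R] (c : σ → R) (Q : MvPolynomial σ R)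
    (d : σ →₀ ℕ) :
    coeff d (bind₁ (fun i => C (c i) * X i) Q) = coeff d Q * d.prod fun i k => c i ^ k := by
  classical
  induction Q using induction_on' with
  | monomial d' r =>
    rw [bind₁_C_mul_X_monomial, coeff_monomial, coeff_monomial]
    split_ifs with h
    · rw [h]
    · rw [zero_mul]
  | add p q hp hq => rw [map_add, coeff_add, coeff_add, hp, hq, add_mul]

lemma pow_eq_one_of_eval_update_mul [CommRing R] [IsDomain R] [Infinite R] [DecidableEq σ]
    {Q : MvPolynomial σ R} {j : σ} {s : R}
    (hQ : ∀ a : σ → R, eval (Function.update a j (s * a j)) Q = eval a Q)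
    {d : σ →₀ ℕ} (hd : d ∈ Q.support) : s ^ d j = 1 := by
  have hscale : bind₁ (fun i => C (Function.update (1 : σ → R) j s i) * X i) Q = Q := by
    refine funext fun a => ?_
    rw [← hQ a, eval, eval₂Hom_bind₁]
    congr 2
    funext i
    rcases eq_or_ne i j with rfl | hi <;> simp [*]
  have := coeff_bind₁_C_mul_X (Function.update 1 j s) Q d
  rw [hscale, Finsupp.prod_pow_update_one] at this
  exact (mul_right_eq_self₀.mp this.symm).resolve_right (mem_support_iff.mp hd)

lemma exists_expand_eq [CommSemiring R] (p : ℕ) (Q : MvPolynomial σ R)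
    (hQ : ∀ d ∈ Q.support, ∀ i, p ∣ d i) : ∃ P, expand p P = Q := by
  refine ⟨∑ d ∈ Q.support, monomial (d.mapRange (· / p) (Nat.zero_div p)) (coeff d Q), ?_⟩
  conv_rhs => rw [Q.as_sum]
  rw [map_sum]
  refine sum_congr rfl fun d hd => ?_
  have hdiv : p • d.mapRange (· / p) (Nat.zero_div p) = d := by
    ext i
    exact Nat.mul_div_cancel' (hQ d hd i)
  rw [expand_monomial, hdiv]

lemma smul_mem_support_expand [CommSemiring R] {p : ℕ} (hp : p ≠ 0) {P : MvPolynomial σ R}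
    {d : σ →₀ ℕ} (hd : d ∈ P.support) : p • d ∈ (expand p P).support := by
  rwa [mem_support_iff, coeff_expand_smul p hp, ← mem_support_iff]

variable [CommRing R] [IsDomain R] [CharZero R] [DecidableEq σ] {Q : MvPolynomial σ R}

lemma even_of_eval_update_neg {j : σ}
    (hQ : ∀ a : σ → R, eval (Function.update a j (-a j)) Q = eval a Q)
    {d : σ →₀ ℕ} (hd : d ∈ Q.support) : Even (d j) :=
  (neg_one_pow_eq_one_iff_even (by norm_num)).mp
    (pow_eq_one_of_eval_update_mul (fun a => by rw [neg_one_mul]; exact hQ a) hd)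

lemma eq_zero_of_eval_update_zero {j : σ}
    (hQ : ∀ a : σ → R, eval (Function.update a j 0) Q = eval a Q)
    {d : σ →₀ ℕ} (hd : d ∈ Q.support) : d j = 0 :=
  zero_pow_eq_one₀.mp (pow_eq_one_of_eval_update_mul (fun a => by rw [zero_mul]; exact hQ a) hd)

lemma exists_expand_two_eq_of_eval_update_neg
    (hQ : ∀ j (a : σ → R), eval (Function.update a j (-a j)) Q = eval a Q) :
    ∃ P, expand 2 P = Q :=
  exists_expand_eq 2 Q fun _ hd j => (even_of_eval_update_neg (hQ j) hd).two_dvd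

end MvPolynomial

section Tpoly

variable {ι : Type*} [Fintype ι] [DecidableEq ι] (n m : ℕ)

lemma Tpoly_comp_perm (g : Equiv.Perm ι) (y : ι → ℝ) :
    Tpoly n ι m (fun i => y (g i)) = Tpoly n ι m y := by
  unfold Tpoly
  congr 1
  refine sum_nbij' (fun r => r ∘ g.symm) (fun r => r ∘ g) ?_ ?_ ?_ ?_ ?_
  · intro r hr
    simp_all [Equiv.sum_comp]
  · intro r hr
    simp_all [Equiv.sum_comp]
  · intro r _; ext; simp
  · intro r _; ext; simp
  · intro r _
    simp only [Function.comp_apply]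
    have hmult : Nat.multinomial univ (r ∘ g.symm) = Nat.multinomial univ r := by
      simp only [Nat.multinomial, Function.comp_apply, Equiv.sum_comp,
        Equiv.prod_comp g.symm fun i => (r i).factorial]
    rw [hmult]
    conv_rhs => rw [← Equiv.prod_comp g]
    simp

lemma Tpoly_sign_mul {ε : ι → ℝ} (hε : ∀ i, ε i ^ 2 = 1) (hprod : ∏ i, ε i = 1)
    (y : ι → ℝ) : Tpoly n ι m (fun i => ε i * y i) = Tpoly n ι m y := by
  unfold Tpoly
  congr 1
  refine sum_congr rfl fun r _ => ?_
  have hodd (i : ι) : (ε i * y i) ^ (2 * r i + 1) = ε i * y i ^ (2 * r i + 1) := by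
    rw [mul_pow, pow_succ, pow_mul, hε, one_pow, one_mul]
  simp only [hodd, mul_div_assoc, prod_mul_distrib, hprod, one_mul]

lemma exists_eval_eq_Tpoly :
    ∃ T : MvPolynomial ι ℝ, ∀ y, MvPolynomial.eval y T = Tpoly n ι m y := by
  open MvPolynomial in
  refine ⟨C ((-1 : ℝ) ^ m *
      ((∏ j ∈ Finset.range m, (((n : ℝ) - (Fintype.card ι : ℝ)) / 2 - j)) /
        (Nat.factorial m))) *
    ∑ r ∈ (Fintype.piFinset fun _ : ι => Finset.range (m + 1)).filter
        (fun r => ∑ i, r i = m),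
      C (Nat.multinomial Finset.univ r : ℝ) *
        ∏ i, X i ^ (2 * r i + 1) * C (2 * r i + 1 : ℝ)⁻¹,
    fun y => ?_⟩
  simp [Tpoly, div_eq_mul_inv]

end Tpoly

section Matching

open MvPolynomial

variable {n : ℕ} (σ : Equiv.Perm (Fin n))

noncomputable def matchingCoord (a : Fin n → ℝ) (x : {i : Fin n // i < σ i} × Bool) : ℝ :=
  (√2)⁻¹ * (a x.1.1 + (if x.2 then 1 else -1) * a (σ x.1.1))

lemma inner_matchingVec (a : EuclideanSpace ℝ (Fin n)) (x : {i : Fin n // i < σ i} × Bool) :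
    ⟪matchingVec σ x, a⟫ = matchingCoord σ a x := by
  simp only [matchingVec, matchingCoord, real_inner_smul_left, inner_add_left,
    EuclideanSpace.inner_single_left, map_one, one_mul]

lemma exists_eval_eq_Tpoly_matchingCoord (m : ℕ) :
    ∃ Q : MvPolynomial (Fin n) ℝ, ∀ a,
      eval a Q = Tpoly n ({i : Fin n // i < σ i} × Bool) m (matchingCoord σ a) := by
  obtain ⟨T, hT⟩ := exists_eval_eq_Tpoly n m (ι := {i : Fin n // i < σ i} × Bool)
  refine ⟨bind₁ (fun x => C (√2)⁻¹ * (X x.1.1 + C (if x.2 then 1 else -1) * X (σ x.1.1)))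
    T, fun a => ?_⟩
  rw [eval, eval₂Hom_bind₁, ← hT]
  congr 2
  funext x
  simp [matchingCoord]

/-- Swaps the two pseudo-roots `(e_i ± e_{σ i})/√2` of the edge containing `j`. -/
def flipAt (j : Fin n) : Equiv.Perm ({i : Fin n // i < σ i} × Bool) :=
  Equiv.prodShear (Equiv.refl _) fun e =>
    if e.1 = j ∨ σ e.1 = j then Equiv.boolNot else Equiv.refl _

lemma matchingCoord_update_neg (a : Fin n → ℝ) (j : Fin n)
    (x : {i : Fin n // i < σ i} × Bool) :
    matchingCoord σ (Function.update a j (-a j)) x =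
      (if x.1.1 = j then -1 else 1) * matchingCoord σ a (flipAt σ j x) := by
  obtain ⟨⟨e, he⟩, b⟩ := x
  by_cases hej : e = j
  · subst hej
    have : σ e ≠ e := he.ne'
    cases b <;>
      simp only [matchingCoord, flipAt, Equiv.prodShear_apply, Equiv.refl_apply,
        Equiv.boolNot_apply, Function.update_self, Function.update_of_ne this, true_or,
        ↓reduceIte, Bool.not_true, Bool.not_false, Bool.false_eq_true] <;> ring
  by_cases hσej : σ e = j
  · subst hσej
    cases b <;> simp [matchingCoord, flipAt, hej]
  · simp [matchingCoord, flipAt, hej, hσej]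

lemma Tpoly_matchingCoord_update_neg (m : ℕ) (a : Fin n → ℝ) (j : Fin n) :
    Tpoly n _ m (matchingCoord σ (Function.update a j (-a j))) =
      Tpoly n _ m (matchingCoord σ a) := by
  rw [funext (matchingCoord_update_neg σ a j), Tpoly_sign_mul, Tpoly_comp_perm]
  · intro x
    split_ifs <;> norm_num
  · rw [Fintype.prod_prod_type]
    exact prod_eq_one fun e _ => by rw [Fintype.prod_bool]; split_ifs <;> norm_num

lemma matchingCoord_update_zero_of_fixed {p : Fin n} (hp : σ p = p) (a : Fin n → ℝ) :
    matchingCoord σ (Function.update a p 0) = matchingCoord σ a := by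
  funext ⟨⟨e, he⟩, b⟩
  have hep : e ≠ p := by rintro rfl; exact he.ne' hp
  have hσep : σ e ≠ p := fun h => hep (σ.injective (h.trans hp.symm))
  simp [matchingCoord, hep, hσep]

lemma exists_Tpoly_matchingCoord_eq_eval_sq (m : ℕ) {p : Fin n} (hp : σ p = p) :
    ∃ P ∈ restrictSupport ℝ {mo | mo p = 0}, ∀ a,
      Tpoly n ({i : Fin n // i < σ i} × Bool) m (matchingCoord σ a) = eval (a ^ 2) P := by
  obtain ⟨Q, hQ⟩ := exists_eval_eq_Tpoly_matchingCoord σ m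
  obtain ⟨P, rfl⟩ := exists_expand_two_eq_of_eval_update_neg fun j a => by
    rw [hQ, hQ, Tpoly_matchingCoord_update_neg]
  refine ⟨P, (mem_restrictSupport_iff ℝ).mpr fun mo hmo => ?_,
    fun a => by rw [← hQ, eval_expand]⟩
  have := eq_zero_of_eval_update_zero (fun a => by
      rw [hQ, hQ, matchingCoord_update_zero_of_fixed σ hp])
    (smul_mem_support_expand two_ne_zero hmo)
  simpa using this

end Matching

lemma exists_fixed_of_mem_maximalMatchings {n : ℕ} {σ : Equiv.Perm (Fin n)}
    (hσ : σ ∈ maximalMatchings n) : ∃ p, σ p = p := by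
  obtain ⟨p, hp⟩ := card_eq_one.mp (mem_filter.mp hσ).2.2
  have hpfix : p ∈ univ.filter fun i => σ i = i := hp ▸ mem_singleton_self p
  exact ⟨p, (mem_filter.mp hpfix).2⟩

lemma exists_Tpoly_inner_eq_eval_sq_of_mem_maximalMatchings {n : ℕ} (m : ℕ)
    {σ : Equiv.Perm (Fin n)} (hσ : σ ∈ maximalMatchings n) :
    ∃ P ∈ MvPolynomial.restrictSupport ℝ {mo : Fin n →₀ ℕ | ∃ i, mo i = 0},
      ∀ a : EuclideanSpace ℝ (Fin n),
        Tpoly n ({i : Fin n // i < σ i} × Bool) m (fun x => ⟪matchingVec σ x, a⟫) =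
          MvPolynomial.eval (fun i => a i ^ 2) P := by
  obtain ⟨p, hp⟩ := exists_fixed_of_mem_maximalMatchings hσ
  obtain ⟨P, hPsupp, hPeval⟩ := exists_Tpoly_matchingCoord_eq_eval_sq σ m hp
  refine ⟨P, MvPolynomial.restrictSupport_mono ℝ ?_ hPsupp, fun a => ?_⟩
  · exact Set.ofPred_subset_ofPred.mpr fun _ h => ⟨p, h⟩
  · simp only [inner_matchingVec]
    exact hPeval a

theorem Z_poly_in_squares_omits_variable_general (n m : ℕ) :
    ∃ P : MvPolynomial (Fin n) ℝ,
      (∀ a : EuclideanSpace ℝ (Fin n),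
        (∑ σ ∈ maximalMatchings n,
          (-1 : ℝ) ^ (matchingCross σ + matchingIsolated σ) *
            Tpoly n ({i : Fin n // i < σ i} × Bool) m
              (fun x => ⟪matchingVec σ x, a⟫)) =
        MvPolynomial.eval (fun i => a i ^ 2) P) ∧
      ∀ mo ∈ P.support, ∃ i, mo i = 0 := by
  choose! P hPsupp hPeval using fun σ (hσ : σ ∈ maximalMatchings n) =>
    exists_Tpoly_inner_eq_eval_sq_of_mem_maximalMatchings m hσ
  refine ⟨∑ σ ∈ maximalMatchings n,
    (-1 : ℝ) ^ (matchingCross σ + matchingIsolated σ) • P σ, fun a => ?_, fun mo hmo => ?_⟩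
  · rw [map_sum]
    exact sum_congr rfl fun σ hσ => by rw [MvPolynomial.smul_eval, hPeval σ hσ a]
  · exact (sum_mem fun σ hσ => Submodule.smul_mem _ _ (hPsupp σ hσ)) hmo

/-- for `n` odd and `k = n - 1`, the polynomial
`Z_d(a) = Σ_M (-1)^M T_d(φ⁺(M); a)` (sum over maximal matchings `M` of `{1,…,n}`, with
`(-1)^M = (-1)^{cross(M)+p-1}`) is a polynomial in the squares `a_1², …, a_n²`, and
every monomial with nonzero coefficient has at least one exponent equal to zero. -/
theorem Z_poly_in_squares_omits_variable (n m : ℕ) (hodd : Odd n) :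
    ∃ P : MvPolynomial (Fin n) ℝ,
      (∀ a : EuclideanSpace ℝ (Fin n),
        (∑ σ ∈ maximalMatchings n,
          (-1 : ℝ) ^ (matchingCross σ + matchingIsolated σ) *
            Tpoly n ({i : Fin n // i < σ i} × Bool) m
              (fun x => ⟪matchingVec σ x, a⟫)) =
        MvPolynomial.eval (fun i => a i ^ 2) P) ∧
      ∀ mo ∈ P.support, ∃ i, mo i = 0 :=
  Z_poly_in_squares_omits_variable_general n m
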